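/- Evaluation of I↑↑_max on classical–quantum states: Let A be a finite index type, X a finite nonempty type, p a strictly positive probability vector on X, and for each x ∈ X let ρ_x be a density matrix on A. Set ρ_{AX} := Σ_x p(x) · ρ_x ⊗ E_xx, ρ_A := Σ_x p(x) · ρ_x, and ρ_X := Σ_x p(x) · E_xx. Then D_max( ρ_{AX} ‖ ρ_A ⊗ ρ_X ) = max over x ∈ X of D_max( ρ_x ‖ ρ_A ), and both sides are finite real numbers. -/

import Mathlib

/-!
Write `F(P, Q)` for the set of `λ` with `e^λ Q - P ⪰ 0`, so that `D_max(P‖Q) = inf F(P, Q)`.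
The operator `e^λ ρ_A ⊗ ρ_X - ρ_AX` is block diagonal with blocks `p(x) (e^λ ρ_A - ρ_x)`, hence
`F(ρ_AX, ρ_A ⊗ ρ_X) = ⋂ₓ F(ρ_x, ρ_A)`. Each `F(ρ_x, ρ_A)` is an up-set (as `ρ_A ⪰ 0`), contains
`-log p(x)` (as `ρ_A ⪰ p(x) ρ_x`) and is bounded below by `0` (take traces), so it lies between
`(aₓ, ∞)` and `[aₓ, ∞)` for some real `aₓ`; the intersection then lies between `(maxₓ aₓ, ∞)` and
`[maxₓ aₓ, ∞)`, and both sides equal `maxₓ aₓ`.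
-/

open Matrix
open scoped ComplexOrder Kronecker

/-- The max-relative entropy `D_max(P‖Q)`. -/
noncomputable def Dmax {n : Type*} [Fintype n] (P Q : Matrix n n ℂ) : EReal :=
  sInf {x : EReal | ∃ lam : ℝ, x = (lam : EReal) ∧ (Real.exp lam • Q - P).PosSemidef}

def IsDensity {n : Type*} [Fintype n] (ρ : Matrix n n ℂ) : Prop :=
  ρ.PosSemidef ∧ ρ.trace = 1

open Set

section Order

variable {α ι : Type*} [ConditionallyCompleteLinearOrder α]

lemma IsUpperSet.Ioi_csInf_subset {s : Set α} (hs : IsUpperSet s) (hne : s.Nonempty) :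
    Ioi (sInf s) ⊆ s := fun _ hb =>
  let ⟨_, ha, hab⟩ := exists_lt_of_csInf_lt hne hb
  hs hab.le ha

lemma Set.Ioi_ciSup_subset_iInter [Finite ι] {s : ι → Set α} {m : ι → α}
    (h : ∀ i, Ioi (m i) ⊆ s i) : Ioi (⨆ i, m i) ⊆ ⋂ i, s i :=
  subset_iInter fun i _ hb =>
    h i ((le_ciSup (finite_range m).bddAbove i).trans_lt hb)

lemma Set.iInter_subset_Ici_ciSup [Nonempty ι] {s : ι → Set α} {m : ι → α}
    (h : ∀ i, s i ⊆ Ici (m i)) : ⋂ i, s i ⊆ Ici (⨆ i, m i) := fun _ hb =>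
  ciSup_le fun i => h i (mem_iInter.mp hb i)

end Order

section DmaxFeasible

variable {n : Type*}

def dmaxFeasible (P Q : Matrix n n ℂ) : Set ℝ :=
  {lam | (Real.exp lam • Q - P).PosSemidef}

@[simp]
lemma mem_dmaxFeasible {P Q : Matrix n n ℂ} {lam : ℝ} :
    lam ∈ dmaxFeasible P Q ↔ (Real.exp lam • Q - P).PosSemidef :=
  Iff.rfl

lemma dmax_eq_of_Ioi_subset_of_subset_Ici [Fintype n] {P Q : Matrix n n ℂ} {m : ℝ}
    (hIoi : Ioi m ⊆ dmaxFeasible P Q) (hIci : dmaxFeasible P Q ⊆ Ici m) : Dmax P Q = m := by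
  have hD : Dmax P Q = sInf ((↑) '' dmaxFeasible P Q) := by
    simp only [Dmax, Set.image, mem_dmaxFeasible, eq_comm, and_comm]
  rw [hD]
  refine le_antisymm ?_ (le_sInf ?_)
  · calc sInf ((↑) '' dmaxFeasible P Q) ≤ sInf (((↑) : ℝ → EReal) '' Ioi m) :=
          sInf_le_sInf (image_mono hIoi)
      _ = m := by rw [EReal.image_coe_Ioi, csInf_Ioo (EReal.coe_lt_top m)]
  · rintro _ ⟨lam, hlam, rfl⟩
    exact EReal.coe_le_coe_iff.mpr (hIci hlam)

lemma isUpperSet_dmaxFeasible (P : Matrix n n ℂ) {Q : Matrix n n ℂ} (hQ : Q.PosSemidef) :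
    IsUpperSet (dmaxFeasible P Q) := by
  intro lam mu hle hlam
  have hsplit :
      Real.exp mu • Q - P = (Real.exp lam • Q - P) + (Real.exp mu - Real.exp lam) • Q := by
    rw [sub_smul]; abel
  rw [mem_dmaxFeasible, hsplit]
  exact hlam.add (hQ.smul (sub_nonneg.mpr (Real.exp_le_exp.mpr hle)))

lemma neg_log_mem_dmaxFeasible {P Q : Matrix n n ℂ} {c : ℝ} (hc : 0 < c)
    (h : (Q - c • P).PosSemidef) : -Real.log c ∈ dmaxFeasible P Q := by
  have hscale : Real.exp (-Real.log c) • Q - P = c⁻¹ • (Q - c • P) := by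
    rw [Real.exp_neg, Real.exp_log hc, smul_sub, smul_smul, inv_mul_cancel₀ hc.ne', one_smul]
  rw [mem_dmaxFeasible, hscale]
  exact h.smul (inv_nonneg.mpr hc.le)

lemma nonneg_of_mem_dmaxFeasible [Fintype n] {P Q : Matrix n n ℂ} (hP : P.trace = 1)
    (hQ : Q.trace = 1) {lam : ℝ} (h : lam ∈ dmaxFeasible P Q) : 0 ≤ lam := by
  have htr : (0 : ℂ) ≤ ((Real.exp lam - 1 : ℝ) : ℂ) := by
    simpa [trace_sub, trace_smul, hP, hQ, Complex.real_smul] using h.trace_nonneg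
  exact Real.one_le_exp_iff.mp (sub_nonneg.mp (Complex.zero_le_real.mp htr))

end DmaxFeasible

namespace Matrix

variable {A X : Type*} [Fintype X] [DecidableEq X]

lemma sum_kronecker_single_eq_blockDiagonal {B α : Type*} [Semiring α] (M : X → Matrix A B α) :
    ∑ x, M x ⊗ₖ single x x (1 : α) = blockDiagonal M := by
  ext ⟨a, x⟩ ⟨b, y⟩
  rcases eq_or_ne x y with rfl | hxy
  · simp [sum_apply, blockDiagonal_apply, single_apply]
  · simp only [sum_apply, kroneckerMap_apply, single_apply, blockDiagonal_apply_ne _ _ _ hxy]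
    exact Finset.sum_eq_zero fun z _ => by
      rw [if_neg fun hz => hxy (hz.1.symm.trans hz.2), mul_zero]

lemma kronecker_sum_smul_single (σ : Matrix A A ℂ) (p : X → ℝ) :
    σ ⊗ₖ ∑ x, p x • single x x (1 : ℂ) = blockDiagonal fun x => p x • σ := by
  simp only [smul_single, sum_single_eq_diagonal, kronecker_diagonal]
  congr 1
  ext x : 1
  simp [Complex.real_smul]

lemma posSemidef_blockDiagonal_iff [Fintype A] {R : Type*} [Ring R] [PartialOrder R] [StarRing R]
    [AddLeftMono R] {M : X → Matrix A A R} :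
    (blockDiagonal M).PosSemidef ↔ ∀ x, (M x).PosSemidef := by
  refine ⟨fun h x => ?_, fun h => ?_⟩
  · have hblock : (blockDiagonal M).submatrix (fun a => (a, x)) (fun a => (a, x)) = M x := by
      ext a b; simp [blockDiagonal_apply]
    exact hblock ▸ h.submatrix _
  · refine posSemidef_iff_dotProduct_mulVec.mpr
      ⟨isHermitian_blockDiagonal_iff.mpr fun x => (h x).isHermitian, fun v => ?_⟩
    have hquad : star v ⬝ᵥ blockDiagonal M *ᵥ v
        = ∑ x, star (fun a => v (a, x)) ⬝ᵥ M x *ᵥ (fun a => v (a, x)) := by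
      simp only [dotProduct, mulVec, Pi.star_apply, blockDiagonal_apply, Fintype.sum_prod_type,
        ite_mul, zero_mul, Finset.sum_ite_eq, Finset.mem_univ, if_true]
      rw [Finset.sum_comm]
    rw [hquad]
    exact Finset.sum_nonneg fun x _ => (h x).dotProduct_mulVec_nonneg _

lemma posSemidef_smul_iff {n : Type*} {M : Matrix n n ℂ} {c : ℝ} (hc : 0 < c) :
    (c • M).PosSemidef ↔ M.PosSemidef := by
  refine ⟨fun h => ?_, fun h => h.smul hc.le⟩
  simpa [smul_smul, hc.ne'] using h.smul (inv_nonneg.mpr hc.le)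

end Matrix

lemma dmaxFeasible_cq_eq_iInter {A X : Type*} [Fintype A] [Fintype X] [DecidableEq X]
    {p : X → ℝ} (hp : ∀ x, 0 < p x) (ρ : X → Matrix A A ℂ) (σ : Matrix A A ℂ) :
    dmaxFeasible (∑ x, p x • (ρ x ⊗ₖ single x x (1 : ℂ))) (σ ⊗ₖ ∑ x, p x • single x x (1 : ℂ))
      = ⋂ x, dmaxFeasible (ρ x) σ := by
  ext lam
  have hblock : Real.exp lam • (σ ⊗ₖ ∑ x, p x • single x x (1 : ℂ))
        - ∑ x, p x • (ρ x ⊗ₖ single x x (1 : ℂ))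
      = blockDiagonal fun x => p x • (Real.exp lam • σ - ρ x) := by
    have hρAX : ∑ x, p x • (ρ x ⊗ₖ single x x (1 : ℂ)) = blockDiagonal fun x => p x • ρ x := by
      simp only [← sum_kronecker_single_eq_blockDiagonal, smul_kronecker]
    rw [hρAX, kronecker_sum_smul_single, ← blockDiagonal_smul, ← blockDiagonal_sub]
    congr 1
    ext x : 1
    simp only [Pi.sub_apply, Pi.smul_apply, smul_sub, smul_comm (Real.exp lam) (p x)]
  simp only [mem_dmaxFeasible, hblock, posSemidef_blockDiagonal_iff, mem_iInter]
  exact forall_congr' fun x => posSemidef_smul_iff (hp x)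

section Mixture

variable {A X : Type*} [Fintype X]

lemma IsDensity.sum_smul [Fintype A] {p : X → ℝ} (hp : ∀ x, 0 ≤ p x) (hpsum : ∑ x, p x = 1)
    {ρ : X → Matrix A A ℂ} (hρ : ∀ x, IsDensity (ρ x)) : IsDensity (∑ x, p x • ρ x) := by
  refine ⟨posSemidef_sum _ fun x _ => (hρ x).1.smul (hp x), ?_⟩
  simp only [trace_sum, trace_smul, (hρ _).2, Complex.real_smul, mul_one]
  exact_mod_cast hpsum

lemma neg_log_mem_dmaxFeasible_sum_smul [DecidableEq X] {p : X → ℝ} (hp : ∀ x, 0 < p x)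
    {ρ : X → Matrix A A ℂ} (hρ : ∀ x, (ρ x).PosSemidef) (x : X) :
    -Real.log (p x) ∈ dmaxFeasible (ρ x) (∑ y, p y • ρ y) := by
  refine neg_log_mem_dmaxFeasible (hp x) ?_
  rw [← Finset.sum_erase_add _ _ (Finset.mem_univ x), add_sub_cancel_right]
  exact posSemidef_sum _ fun y _ => (hρ y).smul (hp y).le

end Mixture

/-- Evaluation of `I↑↑_max` on classical–quantum states:
`D_max(ρ_AX ‖ ρ_A ⊗ ρ_X) = max_x D_max(ρ_x ‖ ρ_A)`, both sides finite. -/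
theorem iupupmax_cq_eval
    {A : Type*} [Fintype A] {X : Type*} [Fintype X] [DecidableEq X] [Nonempty X]
    (p : X → ℝ) (hp : ∀ x, 0 < p x) (hpsum : ∑ x, p x = 1)
    (ρ : X → Matrix A A ℂ) (hρ : ∀ x, IsDensity (ρ x)) :
    let ρAX : Matrix (A × X) (A × X) ℂ :=
      ∑ x, p x • (ρ x ⊗ₖ Matrix.single x x (1 : ℂ))
    let ρA : Matrix A A ℂ := ∑ x, p x • ρ x
    let ρX : Matrix X X ℂ := ∑ x, p x • Matrix.single x x (1 : ℂ)
    Dmax ρAX (ρA ⊗ₖ ρX) = (⨆ x, Dmax (ρ x) ρA) ∧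
      Dmax ρAX (ρA ⊗ₖ ρX) ≠ ⊤ ∧ Dmax ρAX (ρA ⊗ₖ ρX) ≠ ⊥ ∧
      (⨆ x, Dmax (ρ x) ρA) ≠ ⊤ ∧ (⨆ x, Dmax (ρ x) ρA) ≠ ⊥ := by
  intro ρAX ρA ρX
  have hρA : IsDensity ρA := IsDensity.sum_smul (fun x => (hp x).le) hpsum hρ
  set m : X → ℝ := fun x => sInf (dmaxFeasible (ρ x) ρA)
  have hIoi (x : X) : Ioi (m x) ⊆ dmaxFeasible (ρ x) ρA :=
    (isUpperSet_dmaxFeasible _ hρA.1).Ioi_csInf_subset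
      ⟨_, neg_log_mem_dmaxFeasible_sum_smul hp (fun y => (hρ y).1) x⟩
  have hIci (x : X) : dmaxFeasible (ρ x) ρA ⊆ Ici (m x) := fun _ hlam =>
    csInf_le ⟨0, fun _ => nonneg_of_mem_dmaxFeasible (hρ x).2 hρA.2⟩ hlam
  have hD : Dmax ρAX (ρA ⊗ₖ ρX) = ↑(⨆ x, m x) := by
    apply dmax_eq_of_Ioi_subset_of_subset_Ici <;> rw [dmaxFeasible_cq_eq_iInter hp]
    exacts [Ioi_ciSup_subset_iInter hIoi, iInter_subset_Ici_ciSup hIci]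
  have hsup : ⨆ x, Dmax (ρ x) ρA = ↑(⨆ x, m x) := by
    simp_rw [fun x => dmax_eq_of_Ioi_subset_of_subset_Ici (hIoi x) (hIci x)]
    exact (Monotone.map_ciSup_of_continuousAt continuous_coe_real_ereal.continuousAt
      EReal.coe_strictMono.monotone (finite_range m).bddAbove).symm
  rw [hD, hsup]
  simp
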